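/- arXiv:1605.06801 — 3 statements merged into one kernel-verified Lean document; each statement's English description precedes it below -/
import Mathlib

section
/- Let G be a finite bipartite simple graph with parts V_L and V_R, and let G' be formed from G by adding new vertices v, b_L, u, r_R with edges: v adjacent to every vertex of V_L, v–b_L; u adjacent to every vertex of V_R, u–r_R. Consider any position of the distance game D⟨{1,2},{1}⟩ on G' in which blue pieces occupy b_L and possibly some vertices of V_L, red pieces occupy r_R and possibly some vertices of V_R, and no other vertex is occupied. Then an unoccupied vertex x ∈ V_L is a legal Left move if and only if no G-neighbour of x carries a red piece; symmetrically, an unoccupied vertex y ∈ V_R is a legal Right move if and only if no G-neighbour of y carries a blue piece. -/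
open SimpleGraph

/-- In the distance game `D⟨D,S⟩` on the graph `G`, from the position with blue pieces on
`blue` and red pieces on `red`, Left may legally place a blue piece on the vertex `v`. -/
def LeftMove {W : Type*} (G : SimpleGraph W) (D S : Set ℕ) (blue red : Finset W) (v : W) : Prop :=
  v ∉ blue ∧ v ∉ red ∧ (∀ r ∈ red, ∀ d ∈ D, G.edist v r ≠ (d : ℕ∞)) ∧
    ∀ b ∈ blue, ∀ s ∈ S, G.edist v b ≠ (s : ℕ∞)

/-- Right may legally place a red piece on the vertex `v`. -/
def RightMove {W : Type*} (G : SimpleGraph W) (D S : Set ℕ) (blue red : Finset W) (v : W) : Prop :=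
  v ∉ blue ∧ v ∉ red ∧ (∀ b ∈ blue, ∀ d ∈ D, G.edist v b ≠ (d : ℕ∞)) ∧
    ∀ r ∈ red, ∀ s ∈ S, G.edist v r ≠ (s : ℕ∞)


/-- The graph `G'` obtained from the bipartite graph `G` (with parts `VL` and `VR`) by adding
four new vertices `v = inr 0`, `bL = inr 1`, `u = inr 2`, `rR = inr 3`, and edges: `v`
adjacent to every vertex of `VL`, `v–bL`; `u` adjacent to every vertex of `VR`, `u–rR`. -/
def gadgetGraph4 {V : Type*} (G : SimpleGraph V) (VL VR : Finset V) :
    SimpleGraph (V ⊕ Fin 4) :=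
  SimpleGraph.fromRel (fun a b =>
    (∃ x y, G.Adj x y ∧ a = Sum.inl x ∧ b = Sum.inl y) ∨
    (∃ x ∈ VL, a = Sum.inr 0 ∧ b = Sum.inl x) ∨
    (a = Sum.inr 0 ∧ b = Sum.inr 1) ∨
    (∃ y ∈ VR, a = Sum.inr 2 ∧ b = Sum.inl y) ∨
    (a = Sum.inr 2 ∧ b = Sum.inr 3))

/-!
`G'` is bipartite: colour `V_R`, `v` and `r_R` `true`, and `V_L`, `b_L` and `u` `false`. In the
given positions every blue piece has the colour of a vertex `x ∈ V_L` and every red piece the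
other one, so by parity `x` is never at distance `1` from a blue piece nor at distance `2` from a
red one. What remains is adjacency to a red piece, and the only red pieces adjacent to `x` lie on
its `G`-neighbours (`x` is not adjacent to `u`, the only neighbour of `r_R`). Right is symmetric.
-/

theorem SimpleGraph.Coloring.even_iff_of_edist_eq {W : Type*} {G : SimpleGraph W}
    (c : G.Coloring Bool) {u v : W} {k : ℕ} (h : G.edist u v = k) : Even k ↔ c u = c v := by
  obtain ⟨p, rfl⟩ := exists_walk_of_edist_eq_coe h
  exact (c.even_length_iff_congr p).trans Bool.eq_iff_iff.symm

theorem rightMove_iff_leftMove_swap {W : Type*} (G : SimpleGraph W) (D S : Set ℕ)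
    (blue red : Finset W) (v : W) :
    RightMove G D S blue red v ↔ LeftMove G D S red blue v := by
  unfold RightMove LeftMove
  tauto

theorem leftMove_iff_of_coloring {W : Type*} {H : SimpleGraph W} (c : H.Coloring Bool)
    {blue red : Finset W} {v : W} (hvb : v ∉ blue) (hvr : v ∉ red)
    (hblue : ∀ b ∈ blue, c b = c v) (hred : ∀ r ∈ red, c r ≠ c v) :
    LeftMove H {1, 2} {1} blue red v ↔ ∀ r ∈ red, ¬ H.Adj v r := by
  have parity {w : W} {k : ℕ} (h : H.edist v w = k) : Even k ↔ c w = c v :=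
    (c.even_iff_of_edist_eq h).trans eq_comm
  simp only [LeftMove, Set.mem_insert_iff, Set.mem_singleton_iff, forall_eq_or_imp, forall_eq,
    Nat.cast_one, Ne, edist_eq_one_iff_adj]
  refine ⟨fun h r hr => (h.2.2.1 r hr).1, fun h => ⟨hvb, hvr, fun r hr => ⟨h r hr, ?_⟩, ?_⟩⟩
  · exact fun h2 => hred r hr ((parity h2).1 even_two)
  · intro b hb hadj
    simpa using (parity (edist_eq_one_iff_adj.2 hadj)).2 (hblue b hb)

section Gadget

variable {V : Type*} (G : SimpleGraph V) (VL VR : Finset V)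

theorem gadgetGraph4_adj_inl_inl (a b : V) :
    (gadgetGraph4 G VL VR).Adj (Sum.inl a) (Sum.inl b) ↔ G.Adj a b := by
  simp only [gadgetGraph4, fromRel_adj]
  constructor
  · rintro ⟨-, h | h⟩ <;> simp at h
    exacts [h, h.symm]
  · exact fun h => ⟨by simpa using h.ne, Or.inl (Or.inl ⟨a, b, h, rfl, rfl⟩)⟩

theorem gadgetGraph4_adj_inl_inr (a : V) (i : Fin 4) :
    (gadgetGraph4 G VL VR).Adj (Sum.inl a) (Sum.inr i) ↔ (i = 0 ∧ a ∈ VL) ∨ (i = 2 ∧ a ∈ VR) := by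
  simp only [gadgetGraph4, fromRel_adj]
  aesop

theorem gadgetGraph4_forall_not_adj_inl_iff {x : V} {S : Finset (V ⊕ Fin 4)}
    (hS : ∀ i, Sum.inr i ∈ S → ¬ (gadgetGraph4 G VL VR).Adj (Sum.inl x) (Sum.inr i)) :
    (∀ s ∈ S, ¬ (gadgetGraph4 G VL VR).Adj (Sum.inl x) s) ↔ ∀ y, G.Adj x y → Sum.inl y ∉ S := by
  constructor
  · intro h y hxy hy
    exact h _ hy ((gadgetGraph4_adj_inl_inl G VL VR x y).2 hxy)
  · rintro h (y | i) hs
    · rw [gadgetGraph4_adj_inl_inl]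
      exact fun hxy => h y hxy hs
    · exact hS i hs

variable [DecidableEq V]

def gadgetColoring (hparts : Disjoint VL VR)
    (hbip : ∀ ⦃x y : V⦄, G.Adj x y → (x ∈ VL ∧ y ∈ VR) ∨ (x ∈ VR ∧ y ∈ VL)) :
    (gadgetGraph4 G VL VR).Coloring Bool :=
  Coloring.mk (Sum.elim (fun a => decide (a ∈ VR)) ![true, false, false, true]) <| by
    have hLR : ∀ a ∈ VL, a ∉ VR := fun a ha => Finset.disjoint_left.mp hparts ha
    intro a b hab
    rcases a with a | i <;> rcases b with b | j
    · rw [gadgetGraph4_adj_inl_inl] at hab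
      rcases hbip hab with ⟨ha, hb⟩ | ⟨ha, hb⟩ <;> simp [ha, hb, hLR]
    · rw [gadgetGraph4_adj_inl_inr] at hab
      rcases hab with ⟨rfl, ha⟩ | ⟨rfl, ha⟩ <;> simp [ha, hLR]
    · rw [adj_comm, gadgetGraph4_adj_inl_inr] at hab
      rcases hab with ⟨rfl, hb⟩ | ⟨rfl, hb⟩ <;> simp [hb, hLR]
    · fin_cases i <;> fin_cases j <;> simp_all [gadgetGraph4]

variable (hparts : Disjoint VL VR)
  (hbip : ∀ ⦃x y : V⦄, G.Adj x y → (x ∈ VL ∧ y ∈ VR) ∨ (x ∈ VR ∧ y ∈ VL))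

theorem gadgetColoring_inl_of_mem_left {a : V} (ha : a ∈ VL) :
    gadgetColoring G VL VR hparts hbip (Sum.inl a) = false :=
  decide_eq_false (Finset.disjoint_left.mp hparts ha)

theorem gadgetColoring_inl_of_mem_right {a : V} (ha : a ∈ VR) :
    gadgetColoring G VL VR hparts hbip (Sum.inl a) = true :=
  decide_eq_true ha

theorem gadgetColoring_eq_false_of_mem {B : Finset V} (hB : B ⊆ VL) :
    ∀ b ∈ {Sum.inr 1} ∪ B.image Sum.inl, gadgetColoring G VL VR hparts hbip b = false := by
  simp only [Finset.mem_union, Finset.mem_singleton, Finset.mem_image]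
  rintro _ (rfl | ⟨a, ha, rfl⟩)
  exacts [rfl, gadgetColoring_inl_of_mem_left G VL VR hparts hbip (hB ha)]

theorem gadgetColoring_eq_true_of_mem {R : Finset V} (hR : R ⊆ VR) :
    ∀ r ∈ {Sum.inr 3} ∪ R.image Sum.inl, gadgetColoring G VL VR hparts hbip r = true := by
  simp only [Finset.mem_union, Finset.mem_singleton, Finset.mem_image]
  rintro _ (rfl | ⟨a, ha, rfl⟩)
  exacts [rfl, gadgetColoring_inl_of_mem_right G VL VR hparts hbip (hR ha)]

end Gadget

theorem stmt5_general {V : Type*} [DecidableEq V] (G : SimpleGraph V) (VL VR : Finset V)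
    (hparts : Disjoint VL VR)
    (hbip : ∀ ⦃x y : V⦄, G.Adj x y → (x ∈ VL ∧ y ∈ VR) ∨ (x ∈ VR ∧ y ∈ VL))
    (B R : Finset V) (hB : B ⊆ VL) (hR : R ⊆ VR)
    (blue red : Finset (V ⊕ Fin 4))
    (hblue : blue = {Sum.inr 1} ∪ B.image Sum.inl)
    (hred : red = {Sum.inr 3} ∪ R.image Sum.inl) :
    -- an unoccupied vertex `x ∈ V_L` is a legal Left move iff no `G`-neighbour of `x`
    -- carries a red piece:
    (∀ x ∈ VL, Sum.inl x ∉ blue → Sum.inl x ∉ red →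
      (LeftMove (gadgetGraph4 G VL VR) {1, 2} {1} blue red (Sum.inl x) ↔
        ∀ y : V, G.Adj x y → Sum.inl y ∉ red)) ∧
    -- an unoccupied vertex `y ∈ V_R` is a legal Right move iff no `G`-neighbour of `y`
    -- carries a blue piece:
    (∀ y ∈ VR, Sum.inl y ∉ blue → Sum.inl y ∉ red →
      (RightMove (gadgetGraph4 G VL VR) {1, 2} {1} blue red (Sum.inl y) ↔
        ∀ z : V, G.Adj y z → Sum.inl z ∉ blue)) := by
  subst hblue hred
  have blue_colour := gadgetColoring_eq_false_of_mem G VL VR hparts hbip hB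
  have red_colour := gadgetColoring_eq_true_of_mem G VL VR hparts hbip hR
  refine ⟨fun x hx hxb hxr => ?_, fun y hy hyb hyr => ?_⟩
  · have x_colour := gadgetColoring_inl_of_mem_left G VL VR hparts hbip hx
    rw [leftMove_iff_of_coloring _ hxb hxr (fun b hb => (blue_colour b hb).trans x_colour.symm)
      (fun r hr => by simp [red_colour r hr, x_colour])]
    refine gadgetGraph4_forall_not_adj_inl_iff G VL VR fun i hi => ?_
    obtain rfl : i = 3 := by simpa using hi
    simp [gadgetGraph4_adj_inl_inr]
  · have y_colour := gadgetColoring_inl_of_mem_right G VL VR hparts hbip hy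
    rw [rightMove_iff_leftMove_swap, leftMove_iff_of_coloring _ hyr hyb
      (fun r hr => (red_colour r hr).trans y_colour.symm)
      (fun b hb => by simp [blue_colour b hb, y_colour])]
    refine gadgetGraph4_forall_not_adj_inl_iff G VL VR fun i hi => ?_
    obtain rfl : i = 1 := by simpa using hi
    simp [gadgetGraph4_adj_inl_inr]

/-- in the distance game `D⟨{1,2},{1}⟩` on `G'`, in any position where blue
pieces occupy `bL` and possibly some vertices of `V_L`, and red pieces occupy `rR` and
possibly some vertices of `V_R`, an unoccupied `x ∈ V_L` is a legal Left move iff no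
`G`-neighbour of `x` carries a red piece, and an unoccupied `y ∈ V_R` is a legal Right move
iff no `G`-neighbour of `y` carries a blue piece. -/
theorem stmt5 {V : Type*} [Fintype V] [DecidableEq V] (G : SimpleGraph V) (VL VR : Finset V)
    (hcover : ∀ v : V, v ∈ VL ∨ v ∈ VR) (hparts : Disjoint VL VR)
    (hbip : ∀ ⦃x y : V⦄, G.Adj x y → (x ∈ VL ∧ y ∈ VR) ∨ (x ∈ VR ∧ y ∈ VL))
    (B R : Finset V) (hB : B ⊆ VL) (hR : R ⊆ VR)
    (blue red : Finset (V ⊕ Fin 4))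
    (hblue : blue = {Sum.inr 1} ∪ B.image Sum.inl)
    (hred : red = {Sum.inr 3} ∪ R.image Sum.inl) :
    -- an unoccupied vertex `x ∈ V_L` is a legal Left move iff no `G`-neighbour of `x`
    -- carries a red piece:
    (∀ x ∈ VL, Sum.inl x ∉ blue → Sum.inl x ∉ red →
      (LeftMove (gadgetGraph4 G VL VR) {1, 2} {1} blue red (Sum.inl x) ↔
        ∀ y : V, G.Adj x y → Sum.inl y ∉ red)) ∧
    -- an unoccupied vertex `y ∈ V_R` is a legal Right move iff no `G`-neighbour of `y`
    -- carries a blue piece: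
    (∀ y ∈ VR, Sum.inl y ∉ blue → Sum.inl y ∉ red →
      (RightMove (gadgetGraph4 G VL VR) {1, 2} {1} blue red (Sum.inl y) ↔
        ∀ z : V, G.Adj y z → Sum.inl z ∉ blue)) :=
  stmt5_general G VL VR hparts hbip B R hB hR blue red hblue hred
end

section
/- For every finite simple graph G and every integer m ≥ 1, there exist a finite simple graph G' with V(G) ⊆ V(G') and disjoint sets Blue_0, Red_0 ⊆ V(G') \ V(G) such that: (a) every vertex of V(G') \ (V(G) ∪ Blue_0 ∪ Red_0) is at graph distance at most m in G' from some vertex of Blue_0 and at distance at most m from some vertex of Red_0; (b) every vertex of V(G) is at distance at least m+1 in G' from every vertex of Blue_0 ∪ Red_0; (c) for distinct u, v ∈ V(G), dist_{G'}(u,v) = m if uv is an edge of G, and dist_{G'}(u,v) ≥ m+1 otherwise; (d) any two distinct vertices of Blue_0 ∪ Red_0 are at distance at least m+1 in G'. -/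
/-!
Each edge `ab` of `G` becomes a path of length `m` from `a` to `b`; the middle of that path is
joined, through a triangle, to the middle of a second path of length `m + 1` (the spine) whose
two ends are the blue and the red vertex. Upper bounds on distances come from explicit walks
along these two paths. Lower bounds come from potentials `f : V(G') → ℕ` changing by at most one
along every edge, since then `f y - f x ≤ dist(x, y)`. From a vertex `u` of `G` the potential
follows the prescribed distances `0`, `m`, `m + 1` to the vertices of `G` and interpolates along
each path, capped at `m + 1`; from a spine end it is the distance inside its own gadget and
`m + 1` everywhere else.
-/

universe u

namespace SimpleGraph

variable {X : Type*}

theorem le_add_edist_of_adj_le {H : SimpleGraph X} {f : X → ℕ}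
    (hf : ∀ x y, H.Adj x y → f y ≤ f x + 1) (x y : X) :
    (f y : ℕ∞) ≤ f x + H.edist x y := by
  have walk_bound : ∀ {a b : X} (p : H.Walk a b), f b ≤ f a + p.length := by
    intro a b p
    induction p with
    | nil => simp
    | cons h p ih => have := hf _ _ h; rw [Walk.length_cons]; omega
  by_cases hr : H.Reachable x y
  · obtain ⟨p, hp⟩ := hr.exists_walk_length_eq_edist
    rw [← hp]
    exact_mod_cast walk_bound p
  · simp [edist_eq_top_of_not_reachable hr]

theorem le_add_edist_fromRel {r : X → X → Prop} {f : X → ℕ}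
    (hf : ∀ x y, r x y → f x ≤ f y + 1 ∧ f y ≤ f x + 1) (x y : X) :
    (f y : ℕ∞) ≤ f x + (fromRel r).edist x y :=
  le_add_edist_of_adj_le
    (fun x y h => ((fromRel_adj r x y).mp h).2.elim (fun h => (hf x y h).2)
      (fun h => (hf y x h).1)) x y

theorem edist_le_sub_of_adj_succ {H : SimpleGraph X} (v : ℕ → X) {a b : ℕ} (hab : a ≤ b)
    (h : ∀ i, a ≤ i → i < b → H.Adj (v i) (v (i + 1))) :
    H.edist (v a) (v b) ≤ (b - a : ℕ) := by
  induction b, hab using Nat.le_induction with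
  | base => simp
  | succ b hab ih =>
    calc H.edist (v a) (v (b + 1)) ≤ H.edist (v a) (v b) + H.edist (v b) (v (b + 1)) :=
          SimpleGraph.edist_triangle
      _ ≤ (b - a : ℕ) + 1 :=
          add_le_add (ih fun i h₁ h₂ => h i h₁ (by omega))
            (edist_eq_one_iff_adj.mpr (h b hab (by omega))).le
      _ = (b + 1 - a : ℕ) := by rw [Nat.sub_add_comm hab]; push_cast; rfl

theorem edist_le_dist_of_adj_succ {H : SimpleGraph X} (v : ℕ → X) {n : ℕ}
    (h : ∀ i < n, H.Adj (v i) (v (i + 1))) {a b : ℕ} (ha : a ≤ n) (hb : b ≤ n) :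
    H.edist (v a) (v b) ≤ Nat.dist a b := by
  rcases le_total a b with hab | hab
  · rw [Nat.dist_eq_sub_of_le hab]
    exact edist_le_sub_of_adj_succ v hab fun i _ hi => h i (by omega)
  · rw [edist_comm, Nat.dist_comm, Nat.dist_eq_sub_of_le hab]
    exact edist_le_sub_of_adj_succ v hab fun i _ hi => h i (by omega)

end SimpleGraph

open SimpleGraph Finset

namespace ForbiddenGadget

variable {V : Type u}

/-- Every dart `d` of `G` carries a path `pathVertex d 0 = d.fst, …, pathVertex d m = d.snd`
and a spine `spineVertex d 0, …, spineVertex d (m + 1)` whose two ends are the pre-placed blue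
and red vertices. -/
abbrev Vert (G : SimpleGraph V) (m : ℕ) : Type u :=
  V ⊕ (G.Dart × (Fin (m - 1) ⊕ Fin (m + 2)))

variable {G : SimpleGraph V} {m : ℕ}

def pathVertex (d : G.Dart) (k : ℕ) : Vert G m :=
  if hk : k = 0 then .inl d.fst
  else if h : k < m then .inr (d, .inl ⟨k - 1, by omega⟩)
  else .inl d.snd

def spineVertex (d : G.Dart) (j : ℕ) : Vert G m := .inr (d, .inr (Fin.clamp j (m + 1)))

/-- The middle vertex (or edge) of the path is joined to the middle edge (or vertex) of the
spine, forming a triangle. -/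
inductive GadgetRel (G : SimpleGraph V) (m : ℕ) : Vert G m → Vert G m → Prop
  | path (d : G.Dart) (k : ℕ) (hk : k < m) :
      GadgetRel G m (pathVertex d k) (pathVertex d (k + 1))
  | spine (d : G.Dart) (j : ℕ) (hj : j ≤ m) :
      GadgetRel G m (spineVertex d j) (spineVertex d (j + 1))
  | attach (d : G.Dart) (k j : ℕ) (hk : k = m / 2 ∨ k = (m + 1) / 2)
      (hj : j = (m + 1) / 2 ∨ j = m / 2 + 1) : GadgetRel G m (pathVertex d k) (spineVertex d j)

variable (G m) in
def gadgetGraph : SimpleGraph (Vert G m) := fromRel (GadgetRel G m)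

section UpperBounds

lemma pathVertex_zero (d : G.Dart) : (pathVertex d 0 : Vert G m) = .inl d.fst := by
  simp [pathVertex]

lemma pathVertex_self (hm : m ≠ 0) (d : G.Dart) : (pathVertex d m : Vert G m) = .inl d.snd := by
  simp [pathVertex, hm]

lemma pathVertex_succ (d : G.Dart) (i : Fin (m - 1)) :
    (pathVertex d (i + 1) : Vert G m) = .inr (d, .inl i) := by
  simp [pathVertex, show (i : ℕ) + 1 < m by omega]

lemma adj_pathVertex_succ (d : G.Dart) {k : ℕ} (hk : k < m) :
    (gadgetGraph G m).Adj (pathVertex d k) (pathVertex d (k + 1)) := by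
  refine ⟨?_, .inl (.path d k hk)⟩
  have := d.adj.ne
  unfold pathVertex
  split_ifs <;> simp [Fin.ext_iff, *]
  omega

lemma adj_spineVertex_succ (d : G.Dart) {j : ℕ} (hj : j ≤ m) :
    (gadgetGraph G m).Adj (spineVertex d j) (spineVertex d (j + 1)) := by
  refine ⟨?_, .inl (.spine d j hj)⟩
  simp [spineVertex, Fin.ext_iff, Fin.clamp]
  omega

lemma adj_pathVertex_spineVertex (d : G.Dart) {k j : ℕ} (hk : k = m / 2 ∨ k = (m + 1) / 2)
    (hj : j = (m + 1) / 2 ∨ j = m / 2 + 1) :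
    (gadgetGraph G m).Adj (pathVertex d k) (spineVertex d j) := by
  refine ⟨?_, .inl (.attach d k j hk hj)⟩
  unfold pathVertex spineVertex
  split_ifs <;> simp

lemma edist_pathVertex_le (d : G.Dart) {k k' : ℕ} (hk : k ≤ m) (hk' : k' ≤ m) :
    (gadgetGraph G m).edist (pathVertex d k) (pathVertex d k') ≤ Nat.dist k k' :=
  edist_le_dist_of_adj_succ (pathVertex d) (fun _ hi => adj_pathVertex_succ d hi) hk hk'

lemma edist_spineVertex_le (d : G.Dart) {j j' : ℕ} (hj : j ≤ m + 1) (hj' : j' ≤ m + 1) :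
    (gadgetGraph G m).edist (spineVertex d j) (spineVertex d j') ≤ Nat.dist j j' :=
  edist_le_dist_of_adj_succ (spineVertex d)
    (fun _ hi => adj_spineVertex_succ d (Nat.le_of_lt_succ hi)) hj hj'

lemma edist_inl_le_of_adj (hm : m ≠ 0) {a b : V} (h : G.Adj a b) :
    (gadgetGraph G m).edist (.inl a) (.inl b) ≤ m := by
  simpa [pathVertex_zero, pathVertex_self hm, Nat.dist] using
    edist_pathVertex_le (m := m) ⟨(a, b), h⟩ (Nat.zero_le m) le_rfl

lemma edist_pathVertex_spineVertex_le (d : G.Dart) {k t : ℕ} (hk : 1 ≤ k) (hkm : k < m)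
    (ht : t = 0 ∨ t = m + 1) :
    (gadgetGraph G m).edist (pathVertex d k) (spineVertex d t) ≤ m := by
  obtain ⟨k', j', hk', hj', hlen⟩ : ∃ k' j', (k' = m / 2 ∨ k' = (m + 1) / 2) ∧
      (j' = (m + 1) / 2 ∨ j' = m / 2 + 1) ∧ Nat.dist k k' + 1 + Nat.dist j' t ≤ m := by
    simp only [Nat.dist]
    rcases Nat.lt_or_ge k ((m + 1) / 2) with h | h <;> rcases ht with rfl | rfl
    exacts [⟨_, _, .inl rfl, .inl rfl, by omega⟩, ⟨_, _, .inl rfl, .inr rfl, by omega⟩,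
      ⟨_, _, .inr rfl, .inl rfl, by omega⟩, ⟨_, _, .inr rfl, .inr rfl, by omega⟩]
  calc (gadgetGraph G m).edist (pathVertex d k) (spineVertex d t)
      ≤ (gadgetGraph G m).edist (pathVertex d k) (pathVertex d k')
        + (gadgetGraph G m).edist (pathVertex d k') (spineVertex d j')
        + (gadgetGraph G m).edist (spineVertex d j') (spineVertex d t) :=
        SimpleGraph.edist_triangle.trans (by gcongr; exact SimpleGraph.edist_triangle)
    _ ≤ Nat.dist k k' + 1 + Nat.dist j' t := by
        gcongr
        · exact edist_pathVertex_le d hkm.le (by omega)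
        · exact (edist_eq_one_iff_adj.mpr (adj_pathVertex_spineVertex d hk' hj')).le
        · exact edist_spineVertex_le d (by omega) (by omega)
    _ ≤ m := by exact_mod_cast hlen

lemma exists_edist_spineVertex_le (w : Vert G m) (hbase : ∀ v, .inl v ≠ w)
    (hblue : ∀ d, spineVertex d 0 ≠ w) (hred : ∀ d, spineVertex d (m + 1) ≠ w) :
    ∃ d : G.Dart, ∀ t, t = 0 ∨ t = m + 1 →
      (gadgetGraph G m).edist w (spineVertex d t) ≤ m := by
  rcases w with v | ⟨d, i | j⟩
  · exact absurd rfl (hbase v)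
  · refine ⟨d, fun t ht => ?_⟩
    rw [← pathVertex_succ]
    exact edist_pathVertex_spineVertex_le d (by omega) (by omega) ht
  · have hj₀ : (j : ℕ) ≠ 0 := fun h => hblue d (by simp [spineVertex, Fin.ext_iff, h])
    have hj₁ : (j : ℕ) ≠ m + 1 := fun h => hred d (by simp [spineVertex, Fin.ext_iff, h])
    refine ⟨d, fun t ht => ?_⟩
    have hj : (.inr (d, .inr j) : Vert G m) = spineVertex d j := by
      simp [spineVertex, Fin.ext_iff, Fin.clamp]; omega
    rw [hj]
    refine (edist_spineVertex_le d (by omega) (by omega)).trans ?_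
    simp only [Nat.dist]
    exact_mod_cast (by omega)

end UpperBounds

section LowerBounds

/- The potentials `baseLevel G m u` and `endLevel m d₀ t` change by at most one along every edge
and vanish at `.inl u`, resp. `spineVertex d₀ t`; they bound distances from there from below. -/

open Classical in
noncomputable def level (G : SimpleGraph V) (m : ℕ) (u v : V) : ℕ :=
  if v = u then 0 else if G.Adj u v then m else m + 1

noncomputable def pathLevel (m : ℕ) (u : V) (d : G.Dart) (k : ℕ) : ℕ :=
  min (min (level G m u d.fst + k) (level G m u d.snd + (m - k))) (m + 1)

noncomputable def baseLevel (G : SimpleGraph V) (m : ℕ) (u : V) : Vert G m → ℕ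
  | .inl v => level G m u v
  | .inr (d, .inl i) => pathLevel m u d (i + 1)
  | .inr (d, .inr _) => min (pathLevel m u d (m / 2)) (pathLevel m u d ((m + 1) / 2))

open Classical in
noncomputable def endLevel (m : ℕ) (d₀ : G.Dart) (t : ℕ) : Vert G m → ℕ
  | .inl _ => m + 1
  | .inr (d, .inl i) =>
      if d = d₀ then m + 1 - min ((i : ℕ) + 1) (m - ((i : ℕ) + 1)) else m + 1
  | .inr (d, .inr j) => if d = d₀ then Nat.dist j t else m + 1

lemma level_self (u : V) : level G m u u = 0 := by simp [level]

lemma level_le (u v : V) : level G m u v ≤ m + 1 := by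
  unfold level; split_ifs <;> omega

lemma level_le_level_add (hm : m ≠ 0) {u a b : V} (h : G.Adj a b) :
    level G m u a ≤ level G m u b + m := by
  have := h.ne
  have := h.symm
  unfold level
  split_ifs <;> subst_vars <;> first | omega | contradiction

lemma baseLevel_pathVertex (hm : m ≠ 0) (u : V) (d : G.Dart) {k : ℕ} (hk : k ≤ m) :
    baseLevel G m u (pathVertex d k) = pathLevel m u d k := by
  have := level_le_level_add hm (u := u) d.adj
  have := level_le_level_add hm (u := u) d.adj.symm
  have := level_le (G := G) (m := m) u d.fst
  have := level_le (G := G) (m := m) u d.snd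
  unfold pathVertex
  split_ifs <;> simp only [baseLevel, pathLevel] <;> omega

open Classical in
lemma endLevel_pathVertex (d₀ d : G.Dart) (t : ℕ) {k : ℕ} (hk : k ≤ m) :
    endLevel m d₀ t (pathVertex d k) = if d = d₀ then m + 1 - min k (m - k) else m + 1 := by
  by_cases hd : d = d₀ <;> unfold pathVertex <;> split_ifs <;> simp [endLevel, hd] <;> omega

lemma GadgetRel.baseLevel_le (hm : m ≠ 0) (u : V) {x y : Vert G m} (h : GadgetRel G m x y) :
    baseLevel G m u x ≤ baseLevel G m u y + 1 ∧
      baseLevel G m u y ≤ baseLevel G m u x + 1 := by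
  rcases h with ⟨d, k, hk⟩ | ⟨d, j, hj⟩ | ⟨d, k, j, hk, hj⟩
  · rw [baseLevel_pathVertex hm u d hk.le, baseLevel_pathVertex hm u d hk]
    simp only [pathLevel]; omega
  · simp [spineVertex, baseLevel]
  · rw [baseLevel_pathVertex hm u d (by omega)]
    simp only [spineVertex, baseLevel, pathLevel]; omega

lemma GadgetRel.endLevel_le (d₀ : G.Dart) {t : ℕ} (ht : t = 0 ∨ t = m + 1) {x y : Vert G m}
    (h : GadgetRel G m x y) :
    endLevel m d₀ t x ≤ endLevel m d₀ t y + 1 ∧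
      endLevel m d₀ t y ≤ endLevel m d₀ t x + 1 := by
  rcases h with ⟨d, k, hk⟩ | ⟨d, j, hj⟩ | ⟨d, k, j, hk, hj⟩
  · rw [endLevel_pathVertex d₀ d t hk.le, endLevel_pathVertex d₀ d t hk]
    split_ifs <;> omega
  · simp only [spineVertex, endLevel, Fin.clamp, Nat.dist]
    split_ifs <;> omega
  · rw [endLevel_pathVertex d₀ d t (by omega)]
    simp only [spineVertex, endLevel, Fin.clamp, Nat.dist]
    split_ifs <;> omega

lemma level_le_edist (hm : m ≠ 0) (u v : V) :
    (level G m u v : ℕ∞) ≤ (gadgetGraph G m).edist (.inl u) (.inl v) := by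
  simpa [gadgetGraph, baseLevel, level_self] using
    le_add_edist_fromRel (r := GadgetRel G m) (fun _ _ h => h.baseLevel_le hm u)
      (.inl u) (.inl v)

lemma endLevel_le_edist (d₀ : G.Dart) {t : ℕ} (ht : t = 0 ∨ t = m + 1) (y : Vert G m) :
    (endLevel m d₀ t y : ℕ∞) ≤ (gadgetGraph G m).edist (spineVertex d₀ t) y := by
  have h₀ : endLevel m d₀ t (spineVertex d₀ t) = 0 := by
    simp only [spineVertex, endLevel, Fin.clamp, Nat.dist, if_pos]; omega
  simpa [gadgetGraph, h₀] using
    le_add_edist_fromRel (r := GadgetRel G m) (fun _ _ h => h.endLevel_le d₀ ht)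
      (spineVertex d₀ t) y

lemma le_edist_inl_spineVertex {t : ℕ} (ht : t = 0 ∨ t = m + 1) (v : V) (d : G.Dart) :
    (m : ℕ∞) + 1 ≤ (gadgetGraph G m).edist (.inl v) (spineVertex d t) := by
  rw [edist_comm]
  exact_mod_cast endLevel_le_edist d ht (.inl v)

lemma le_edist_spineVertex {t s : ℕ} (ht : t = 0 ∨ t = m + 1) (hs : s = 0 ∨ s = m + 1)
    {d d' : G.Dart} (hne : (spineVertex d t : Vert G m) ≠ spineVertex d' s) :
    (m : ℕ∞) + 1 ≤ (gadgetGraph G m).edist (spineVertex d t) (spineVertex d' s) := by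
  refine le_trans ?_ (endLevel_le_edist d ht (spineVertex d' s))
  have hts : d' = d → s ≠ t := by
    rintro rfl rfl
    exact hne rfl
  simp only [spineVertex, endLevel, Fin.clamp, Nat.dist]
  split_ifs with hd
  · have := hts hd
    exact_mod_cast (by omega)
  · push_cast; rfl

lemma edist_inl_of_adj (hm : m ≠ 0) {u v : V} (h : G.Adj u v) :
    (gadgetGraph G m).edist (.inl u) (.inl v) = m :=
  le_antisymm (edist_inl_le_of_adj hm h)
    (by simpa [level, h.ne', h] using level_le_edist (G := G) hm u v)

lemma le_edist_inl_of_not_adj (hm : m ≠ 0) {u v : V} (hne : u ≠ v) (h : ¬G.Adj u v) :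
    (m : ℕ∞) + 1 ≤ (gadgetGraph G m).edist (.inl u) (.inl v) := by
  exact_mod_cast (by simpa [level, hne.symm, h] using level_le_edist (G := G) hm u v :
    ((m + 1 : ℕ) : ℕ∞) ≤ _)

end LowerBounds

end ForbiddenGadget

open ForbiddenGadget

/-- STATEMENT 9: for every finite simple graph `G` and every `m ≥ 1` there is a finite simple
graph `G'` containing the vertices of `G` (via an embedding `ι`), together with disjoint sets
`Blue0`, `Red0` of new vertices, satisfying conditions (a)–(d). -/
theorem stmt12 {V : Type u} [Fintype V] (G : SimpleGraph V) (m : ℕ) (hm : 1 ≤ m) :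
    ∃ (W : Type u) (_ : Fintype W) (G' : SimpleGraph W) (ι : V ↪ W)
      (Blue0 Red0 : Finset W),
      Disjoint Blue0 Red0 ∧ (∀ v : V, ι v ∉ Blue0 ∧ ι v ∉ Red0) ∧
      -- (a) every extra vertex is within distance `m` of `Blue0` and of `Red0`:
      (∀ w : W, (∀ v : V, ι v ≠ w) → w ∉ Blue0 → w ∉ Red0 →
        (∃ b ∈ Blue0, G'.edist w b ≤ (m : ℕ∞)) ∧ (∃ r ∈ Red0, G'.edist w r ≤ (m : ℕ∞))) ∧
      -- (b) every vertex of `V(G)` is at distance at least `m+1` from `Blue0 ∪ Red0`: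
      (∀ v : V, ∀ w : W, w ∈ Blue0 ∨ w ∈ Red0 → (m : ℕ∞) + 1 ≤ G'.edist (ι v) w) ∧
      -- (c) distances between vertices of `V(G)`:
      (∀ u v : V, u ≠ v →
        (G.Adj u v → G'.edist (ι u) (ι v) = (m : ℕ∞)) ∧
        (¬G.Adj u v → (m : ℕ∞) + 1 ≤ G'.edist (ι u) (ι v))) ∧
      -- (d) distinct vertices of `Blue0 ∪ Red0` are at distance at least `m+1`:
      (∀ w₁ w₂ : W, w₁ ∈ Blue0 ∨ w₁ ∈ Red0 → w₂ ∈ Blue0 ∨ w₂ ∈ Red0 → w₁ ≠ w₂ →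
        (m : ℕ∞) + 1 ≤ G'.edist w₁ w₂) := by
  classical
  have hm₀ : m ≠ 0 := Nat.one_le_iff_ne_zero.mp hm
  have mem_ends : ∀ {w : Vert G m}, w ∈ univ.image (spineVertex · 0) ∨
      w ∈ univ.image (spineVertex · (m + 1)) →
      ∃ d t, (t = 0 ∨ t = m + 1) ∧ spineVertex d t = w := by
    rintro w (hw | hw) <;> obtain ⟨d, -, rfl⟩ := mem_image.mp hw
    exacts [⟨d, 0, .inl rfl, rfl⟩, ⟨d, m + 1, .inr rfl, rfl⟩]
  refine ⟨Vert G m, inferInstance, gadgetGraph G m, ⟨Sum.inl, Sum.inl_injective⟩,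
    univ.image (spineVertex · 0), univ.image (spineVertex · (m + 1)), ?_, ?_, ?_, ?_, ?_, ?_⟩
  · simp [Finset.disjoint_left, spineVertex, Fin.ext_iff]
  · simp [spineVertex]
  · intro w hbase hblue hred
    obtain ⟨d, hd⟩ :=
      exists_edist_spineVertex_le w hbase (by simpa using hblue) (by simpa using hred)
    exact ⟨⟨_, mem_image_of_mem _ (mem_univ d), hd 0 (.inl rfl)⟩,
      ⟨_, mem_image_of_mem _ (mem_univ d), hd (m + 1) (.inr rfl)⟩⟩
  · intro v w hw
    obtain ⟨d, t, ht, rfl⟩ := mem_ends hw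
    exact le_edist_inl_spineVertex ht v d
  · exact fun u v huv => ⟨edist_inl_of_adj hm₀, le_edist_inl_of_not_adj hm₀ huv⟩
  · intro w₁ w₂ hw₁ hw₂ hne
    obtain ⟨d, t, ht, rfl⟩ := mem_ends hw₁
    obtain ⟨d', s, hs, rfl⟩ := mem_ends hw₂
    exact le_edist_spineVertex ht hs hne
end

section
/- For every finite bipartite simple graph G with parts V_L and V_R and all integers n, k with 1 < n < k < 2n, there exist a finite simple graph G' with V_L ∪ V_R ⊆ V(G') and disjoint sets Blue_0, Red_0 ⊆ V(G') \ (V_L ∪ V_R) such that: (a) every vertex of V(G') \ (V_L ∪ V_R ∪ Blue_0 ∪ Red_0) is at graph distance at most k in G' from some vertex of Blue_0 and at distance at most k from some vertex of Red_0; (b) every x ∈ V_L is at distance at most k from some vertex of Red_0, at distance at least k+1 from every vertex of Blue_0, and at distance at least n+1 from every vertex of Red_0; (b') every y ∈ V_R is at distance at most k from some vertex of Blue_0, at distance at least k+1 from every vertex of Red_0, and at distance at least n+1 from every vertex of Blue_0; (c) for distinct u, v ∈ V_L ∪ V_R, dist_{G'}(u,v) = n if uv is an edge of G, and dist_{G'}(u,v)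 ≥ k+1 otherwise; (d) any two distinct vertices of Blue_0 ∪ Red_0 are at distance at least k+1 in G'. -/
/-!
Build `G'` from paths, called strands. Every edge `xy` of `G` becomes a path of length `n`
between the copies of `x` and `y` (one path per orientation; the duplicate is harmless), and
every vertex `v` of `G` gets a tail of length `k` ending in a tip, coloured blue if `v ∈ VR` and
red otherwise. Every interior vertex of these paths, a site, carries a gadget: a rung, i.e. a path
of length `k + 1` whose ends (the poles) are coloured blue and red, and a stem from the site to the
middle of the rung (to both middle vertices when `k` is even), so that the site is at distance
exactly `k` from both poles.

Upper bounds on distances are read off the strands. Lower bounds come from potentials: a function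
that vanishes at `c` and changes by at most one along every strand is a lower bound for the
distance from `c`. The distance functions from a pole, from a tip and from a copy of a vertex `u`
of `G`, capped at `k + 1`, can be written down explicitly and are such potentials. The last one
takes the value `n` at the neighbours of `u` and `k + 1` at the other vertices of `G`; the gap
`k + 1 - n` can be spread over the `n` steps of an edge path exactly because `k + 1 ≤ 2n`.
-/

namespace SimpleGraph

variable {α : Type*} {H : SimpleGraph α}

theorem Walk.le_add_length_of_lipschitz (f : α → ℕ) (hf : ∀ a b, H.Adj a b → f b ≤ f a + 1)
    {u v : α} (p : H.Walk u v) : f v ≤ f u + p.length := by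
  induction p with
  | nil => simp
  | cons h _ ih => have := hf _ _ h; rw [Walk.length_cons]; omega

theorem le_add_edist_of_lipschitz (f : α → ℕ) (hf : ∀ a b, H.Adj a b → f b ≤ f a + 1)
    (u v : α) : (f v : ℕ∞) ≤ f u + H.edist u v := by
  by_cases h : H.edist u v = ⊤
  · simp [h]
  · obtain ⟨p, hp⟩ := exists_walk_of_edist_ne_top h
    rw [← hp]
    exact_mod_cast p.le_add_length_of_lipschitz f hf

theorem edist_le_of_chain (p : ℕ → α) {i j : ℕ} (hij : i ≤ j)
    (hp : ∀ l, i ≤ l → l < j → H.Adj (p l) (p (l + 1)) ∨ p l = p (l + 1)) :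
    H.edist (p i) (p j) ≤ (j - i : ℕ) := by
  induction j, hij using Nat.le_induction with
  | base => simp
  | succ j hij ih =>
    calc H.edist (p i) (p (j + 1)) ≤ H.edist (p i) (p j) + H.edist (p j) (p (j + 1)) :=
          SimpleGraph.edist_triangle
      _ ≤ (j - i : ℕ) + 1 :=
          add_le_add (ih fun l h₁ h₂ => hp l h₁ (by omega))
            (edist_le_one_iff_adj_or_eq.2 (hp j hij (by omega)))
      _ = (j + 1 - i : ℕ) := by rw [Nat.sub_add_comm hij, Nat.cast_succ]

end SimpleGraph

section PathSeq

variable {α : Type*} {m : ℕ}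

-- The sequence `a, mid 0, …, mid (m - 1), b, b, …`.
def pathSeq (a : α) (mid : Fin m → α) (b : α) (i : ℕ) : α :=
  if i = 0 then a else if h : i - 1 < m then mid ⟨i - 1, h⟩ else b

variable {a b : α} {mid : Fin m → α}

@[simp] theorem pathSeq_zero : pathSeq a mid b 0 = a := if_pos rfl

theorem pathSeq_succ (i : Fin m) : pathSeq a mid b (i + 1) = mid i := by
  simp [pathSeq]

@[simp] theorem pathSeq_succ_length : pathSeq a mid b (m + 1) = b := by
  simp [pathSeq]

theorem pathSeq_steps {P : α → α → Prop} (hfirst : ∀ i : Fin m, i.val = 0 → P a (mid i))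
    (hmid : ∀ i j : Fin m, j.val = i.val + 1 → P (mid i) (mid j))
    (hlast : ∀ i : Fin m, i.val + 1 = m → P (mid i) b) (hdirect : m = 0 → P a b) :
    ∀ i < m + 1, P (pathSeq a mid b i) (pathSeq a mid b (i + 1)) := by
  rintro (_ | i) hi
  · rcases Nat.eq_zero_or_pos m with rfl | hm
    · simpa using hdirect rfl
    · simpa [pathSeq_succ ⟨0, hm⟩] using hfirst ⟨0, hm⟩ rfl
  · rw [pathSeq_succ ⟨i, by omega⟩]
    by_cases hi' : i + 1 < m
    · rw [pathSeq_succ ⟨i + 1, hi'⟩]; exact hmid _ _ rfl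
    · obtain rfl : m = i + 1 := by omega
      rw [pathSeq_succ_length]; exact hlast _ rfl

end PathSeq

namespace GadgetGraph

open scoped Classical

noncomputable section

variable {V : Type u} (G : SimpleGraph V) (n k : ℕ)

-- The interior vertices of the edge paths, indexed by darts, and of the tails.
abbrev Site : Type u := (G.Dart × Fin (n - 1)) ⊕ (V × Fin (k - 1))

def stemLen (k : ℕ) : ℕ := (k - 2) / 2

-- The interior vertices of the stem, then the rung from the blue pole `0` to the red pole `k + 1`.
abbrev Gadget (k : ℕ) : Type := Fin (stemLen k) ⊕ Fin (k + 2)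

inductive Vert : Type u
  | base (v : V)
  | site (s : Site G n k)
  | gadget (s : Site G n k) (g : Gadget k)
  | tip (v : V)

inductive Strand : Type u
  | edge (d : G.Dart)
  | tail (v : V)
  | rung (s : Site G n k)
  -- `t` is a middle vertex of the rung; the stem has length `stemLen k + 1`, which puts the site
  -- at distance `k` from both poles.
  | stem (s : Site G n k) (t : Fin (k + 2)) (ht : (k + 1) / 2 ≤ t.val ∧ t.val ≤ (k + 2) / 2)

variable {G n k}

namespace Vert

def toSum : Vert G n k → V ⊕ Site G n k ⊕ (Site G n k × Gadget k) ⊕ V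
  | base v => .inl v
  | site s => .inr (.inl s)
  | gadget s g => .inr (.inr (.inl (s, g)))
  | tip v => .inr (.inr (.inr v))

theorem toSum_injective : Function.Injective (toSum : Vert G n k → _) := by
  intro a b h
  cases a <;> cases b <;> simp_all [toSum]

instance [Fintype V] : Finite (Vert G n k) := Finite.of_injective _ toSum_injective

@[simps]
def baseEmbedding : V ↪ Vert G n k := ⟨base, fun _ _ => base.inj⟩

end Vert

namespace Strand

def length : Strand G n k → ℕ
  | edge _ => n - 1 + 1
  | tail _ => k - 1 + 1
  | rung _ => k + 1
  | stem .. => stemLen k + 1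

def vertex : Strand G n k → ℕ → Vert G n k
  | edge d => pathSeq (.base d.fst) (fun i => .site (.inl (d, i))) (.base d.snd)
  | tail v => pathSeq (.base v) (fun j => .site (.inr (v, j))) (.tip v)
  | rung s => fun i => .gadget s (.inr ⟨min i (k + 1), by omega⟩)
  | stem s t _ => pathSeq (.site s) (fun i => .gadget s (.inl i)) (.gadget s (.inr t))

end Strand

variable (G n k) in
def graph : SimpleGraph (Vert G n k) :=
  SimpleGraph.fromRel fun a b =>
    ∃ (σ : Strand G n k) (i : ℕ), i < σ.length ∧ σ.vertex i = a ∧ σ.vertex (i + 1) = b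

theorem Strand.edist_vertex_le (σ : Strand G n k) {i j : ℕ} (hij : i ≤ j) (hj : j ≤ σ.length) :
    (graph G n k).edist (σ.vertex i) (σ.vertex j) ≤ (j - i : ℕ) := by
  refine SimpleGraph.edist_le_of_chain _ hij fun l _ hl => ?_
  by_cases h : σ.vertex l = σ.vertex (l + 1)
  · exact .inr h
  · exact .inl ((SimpleGraph.fromRel_adj _ _ _).2 ⟨h, .inl ⟨σ, l, by omega, rfl, rfl⟩⟩)

abbrev LipschitzStep {α : Type*} (f : α → ℕ) (a b : α) : Prop := f a ≤ f b + 1 ∧ f b ≤ f a + 1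

def IsLipschitzOn (f : Vert G n k → ℕ) (σ : Strand G n k) : Prop :=
  ∀ i < σ.length, LipschitzStep f (σ.vertex i) (σ.vertex (i + 1))

theorem le_edist_of_isLipschitzOn {f : Vert G n k → ℕ} (hf : ∀ σ, IsLipschitzOn f σ)
    {c w : Vert G n k} (hc : f c = 0) {m : ℕ} (hm : m ≤ f w) :
    (m : ℕ∞) ≤ (graph G n k).edist c w := by
  have h := SimpleGraph.le_add_edist_of_lipschitz (H := graph G n k) f ?_ c w
  · rw [hc, Nat.cast_zero, zero_add] at h
    exact le_trans (by exact_mod_cast hm) h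
  rintro a b ⟨-, ⟨σ, i, hi, rfl, rfl⟩ | ⟨σ, i, hi, rfl, rfl⟩⟩
  exacts [(hf σ i hi).2, (hf σ i hi).1]

-- The distance from the site inside the gadget.
def depth (k : ℕ) : Gadget k → ℕ
  | .inl st => st + 1
  | .inr z => stemLen k + 1 + ((k + 1) / 2 - z) + (z - (k + 2) / 2)

-- A potential given on the skeleton, continued into each gadget through its site.
def extend (onBase : V → ℕ) (onSite : Site G n k → ℕ) (onTip : V → ℕ) : Vert G n k → ℕ
  | .base v => onBase v
  | .site s => onSite s
  | .gadget s g => min (k + 1) (onSite s + depth k g)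
  | .tip v => onTip v

section Extend

variable {onBase : V → ℕ} {onSite : Site G n k → ℕ} {onTip : V → ℕ}

theorem isLipschitzOn_extend_rung (s : Site G n k) :
    IsLipschitzOn (extend onBase onSite onTip) (.rung s) := by
  intro i hi
  simp only [LipschitzStep, Strand.vertex, extend, depth]
  omega

theorem isLipschitzOn_extend_stem {s : Site G n k} (hs : onSite s ≤ k + 1) (t : Fin (k + 2))
    (ht : (k + 1) / 2 ≤ t.val ∧ t.val ≤ (k + 2) / 2) :
    IsLipschitzOn (extend onBase onSite onTip) (.stem s t ht) := by
  intro i hi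
  dsimp only [Strand.vertex, Strand.length] at hi ⊢
  refine pathSeq_steps (P := LipschitzStep _) ?_ ?_ ?_ ?_ i hi <;> intros <;>
    simp only [LipschitzStep, extend, depth] <;> omega

end Extend

def polePotential (s₀ : Site G n k) (p : Fin (k + 2)) : Vert G n k → ℕ
  | .site s => if s = s₀ then k else k + 1
  | .gadget s (.inl st) => if s = s₀ then k - 1 - st else k + 1
  | .gadget s (.inr z) => if s = s₀ then (z - p : ℕ) + (p - z : ℕ) else k + 1
  | _ => k + 1

theorem isLipschitzOn_polePotential (s₀ : Site G n k) {p : Fin (k + 2)}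
    (hp : p.val = 0 ∨ p.val = k + 1) (σ : Strand G n k) :
    IsLipschitzOn (polePotential s₀ p) σ := by
  cases σ with
  | rung s =>
    intro i hi
    simp only [LipschitzStep, Strand.vertex, polePotential]
    split_ifs <;> omega
  | _ =>
    intro i hi
    dsimp only [Strand.vertex, Strand.length] at hi ⊢
    refine pathSeq_steps (P := LipschitzStep _) ?_ ?_ ?_ ?_ i hi <;>
      intros <;> simp only [LipschitzStep, polePotential, stemLen] at * <;> (try split_ifs) <;>
      omega

def tipPotential (x : V) : Vert G n k → ℕ :=
  extend (fun v => if v = x then k else k + 1)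
    (fun | .inl _ => k + 1 | .inr (v, j) => if v = x then k - 1 - j else k + 1)
    (fun v => if v = x then 0 else k + 1)

theorem isLipschitzOn_tipPotential (x : V) (σ : Strand G n k) :
    IsLipschitzOn (tipPotential x) σ := by
  cases σ with
  | rung s => exact isLipschitzOn_extend_rung s
  | stem s t ht =>
    refine isLipschitzOn_extend_stem ?_ t ht
    rcases s with _ | ⟨v, j⟩
    · exact le_rfl
    · dsimp only; split_ifs <;> omega
  | _ =>
    intro i hi
    dsimp only [Strand.vertex, Strand.length] at hi ⊢
    refine pathSeq_steps (P := LipschitzStep _) ?_ ?_ ?_ ?_ i hi <;>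
      intros <;> simp only [LipschitzStep, tipPotential, extend] at * <;> (try split_ifs) <;> omega

variable (G n k) in
def baseLevel (u v : V) : ℕ := if v = u then 0 else if G.Adj u v then n else k + 1

variable (G) in
theorem baseLevel_le (hnk : n ≤ k) (u v : V) : baseLevel G n k u v ≤ k + 1 := by
  unfold baseLevel; split_ifs <;> omega

theorem baseLevel_le_add_of_adj (hk2n : k < 2 * n) (u : V) {x y : V} (h : G.Adj x y) :
    baseLevel G n k u x ≤ baseLevel G n k u y + n := by
  unfold baseLevel
  split_ifs with h₁ h₂ h₃ h₄ <;> subst_vars <;> first | omega | exact absurd h.symm ‹_›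

def basePotential (u : V) : Vert G n k → ℕ :=
  extend (baseLevel G n k u)
    (fun
      | .inl (d, i) => min (k + 1)
          (min (baseLevel G n k u d.fst + (i + 1)) (baseLevel G n k u d.snd + (n - 1 - i)))
      | .inr (v, j) => min (k + 1) (baseLevel G n k u v + (j + 1)))
    (fun v => min (k + 1) (baseLevel G n k u v + k))

theorem isLipschitzOn_basePotential (hnk : n ≤ k) (hk2n : k < 2 * n) (u : V)
    (σ : Strand G n k) : IsLipschitzOn (basePotential u) σ := by
  cases σ with
  | rung s => exact isLipschitzOn_extend_rung s
  | stem s t ht => exact isLipschitzOn_extend_stem (by rcases s with _ | _ <;> simp) t ht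
  | edge d =>
    have h₁ := baseLevel_le_add_of_adj hk2n u d.adj
    have h₂ := baseLevel_le_add_of_adj hk2n u d.adj.symm
    have h₃ := baseLevel_le G hnk u d.fst
    have h₄ := baseLevel_le G hnk u d.snd
    intro i hi
    dsimp only [Strand.vertex, Strand.length] at hi ⊢
    refine pathSeq_steps (P := LipschitzStep _) ?_ ?_ ?_ ?_ i hi <;>
      intros <;> simp only [LipschitzStep, basePotential, extend] at * <;> omega
  | tail v =>
    have := baseLevel_le G hnk u v
    intro i hi
    dsimp only [Strand.vertex, Strand.length] at hi ⊢
    refine pathSeq_steps (P := LipschitzStep _) ?_ ?_ ?_ ?_ i hi <;>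
      intros <;> simp only [LipschitzStep, basePotential, extend] at * <;> omega

def IsPole : Vert G n k → Prop
  | .gadget _ (.inr z) => z.val = 0 ∨ z.val = k + 1
  | .tip _ => True
  | _ => False

theorem polePotential_eq_of_isPole {s₀ : Site G n k} {p : Fin (k + 2)}
    (hp : p.val = 0 ∨ p.val = k + 1) {w : Vert G n k} (hw : IsPole w)
    (hne : w ≠ .gadget s₀ (.inr p)) : polePotential s₀ p w = k + 1 := by
  rcases w with _ | _ | ⟨s, _ | z⟩ | _ <;> simp only [IsPole] at hw
  · simp only [polePotential]
    split_ifs with hs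
    · subst hs
      have : z.val ≠ p.val := fun h => hne (by rw [Fin.ext h])
      omega
    · rfl
  · rfl

theorem tipPotential_eq_of_isPole {x : V} {w : Vert G n k} (hw : IsPole w)
    (hne : w ≠ .tip x) : tipPotential x w = k + 1 := by
  rcases w with _ | _ | ⟨_ | ⟨v, j⟩, _ | z⟩ | v <;> simp only [IsPole] at hw
  · simp [tipPotential, extend]
  · simp only [tipPotential, extend, depth, stemLen]
    split_ifs <;> omega
  · simp only [tipPotential, extend]
    exact if_neg fun h : v = x => hne (h ▸ rfl)

theorem exists_potential_of_isPole {c : Vert G n k} (hc : IsPole c) :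
    ∃ f : Vert G n k → ℕ, (∀ σ, IsLipschitzOn f σ) ∧ f c = 0 ∧
      (∀ w, IsPole w → w ≠ c → f w = k + 1) ∧ ∀ x, c ≠ .tip x → f (.base x) = k + 1 := by
  rcases c with _ | _ | ⟨s, _ | p⟩ | x <;> simp only [IsPole] at hc
  · exact ⟨polePotential s p, isLipschitzOn_polePotential s hc, by simp [polePotential],
      fun w hw hne => polePotential_eq_of_isPole hc hw hne, fun _ _ => rfl⟩
  · refine ⟨tipPotential x, isLipschitzOn_tipPotential x, by simp [tipPotential, extend],
      fun w hw hne => tipPotential_eq_of_isPole hw hne, fun y hy => ?_⟩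
    have : y ≠ x := by rintro rfl; exact hy rfl
    simp [tipPotential, extend, this]

theorem add_one_le_edist_of_isPole {c w : Vert G n k} (hc : IsPole c)
    (hw : IsPole w) (hne : w ≠ c) : (k : ℕ∞) + 1 ≤ (graph G n k).edist c w := by
  obtain ⟨f, hf, hfc, hpole, -⟩ := exists_potential_of_isPole hc
  exact_mod_cast le_edist_of_isLipschitzOn hf hfc (hpole w hw hne).ge

theorem add_one_le_edist_base_of_isPole {c : Vert G n k} (hc : IsPole c) {x : V}
    (hx : c ≠ .tip x) : (k : ℕ∞) + 1 ≤ (graph G n k).edist (.base x) c := by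
  obtain ⟨f, hf, hfc, -, hbase⟩ := exists_potential_of_isPole hc
  rw [SimpleGraph.edist_comm]
  exact_mod_cast le_edist_of_isLipschitzOn hf hfc (hbase x hx).ge

theorem le_edist_base_of_isPole {c : Vert G n k} (hc : IsPole c) (x : V) :
    (k : ℕ∞) ≤ (graph G n k).edist (.base x) c := by
  by_cases hx : c = .tip x
  · subst hx
    rw [SimpleGraph.edist_comm]
    exact le_edist_of_isLipschitzOn (isLipschitzOn_tipPotential x) (by simp [tipPotential, extend])
      (by simp [tipPotential, extend])
  · exact le_self_add.trans (add_one_le_edist_base_of_isPole hc hx)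

theorem edist_base_tip_le (hk : 1 ≤ k) (x : V) : (graph G n k).edist (.base x) (.tip x) ≤ k := by
  have h := (Strand.tail (G := G) (n := n) (k := k) x).edist_vertex_le (Nat.zero_le _) le_rfl
  simp only [Strand.vertex, Strand.length, pathSeq_zero, pathSeq_succ_length] at h
  exact h.trans (by norm_cast; omega)

theorem edist_base_le_of_adj (hn : 1 ≤ n) {u v : V} (h : G.Adj u v) :
    (graph G n k).edist (.base u) (.base v) ≤ n := by
  have h := (Strand.edge (n := n) (k := k) ⟨(u, v), h⟩).edist_vertex_le (Nat.zero_le _) le_rfl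
  simp only [Strand.vertex, Strand.length, pathSeq_zero, pathSeq_succ_length] at h
  exact h.trans (by norm_cast; omega)

theorem le_edist_base (hnk : n ≤ k) (hk2n : k < 2 * n) (u v : V) :
    (baseLevel G n k u v : ℕ∞) ≤ (graph G n k).edist (.base u) (.base v) :=
  le_edist_of_isLipschitzOn (isLipschitzOn_basePotential hnk hk2n u)
    (by simp [basePotential, extend, baseLevel]) le_rfl

theorem Strand.vertex_rung (s : Site G n k) (z : Fin (k + 2)) :
    (Strand.rung s).vertex z = .gadget s (.inr z) := by
  simp [Strand.vertex, Nat.le_of_lt_succ z.isLt]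

theorem edist_rung_le (s : Site G n k) (z z' : Fin (k + 2)) :
    (graph G n k).edist (.gadget s (.inr z)) (.gadget s (.inr z')) ≤
      ((z - z' : ℕ) + (z' - z : ℕ) : ℕ) := by
  wlog h : z ≤ z' generalizing z z'
  · rw [SimpleGraph.edist_comm]; exact (this z' z (by omega)).trans (by norm_cast; omega)
  have := (Strand.rung s).edist_vertex_le (G := G) (n := n) h (by simp only [Strand.length]; omega)
  rw [Strand.vertex_rung, Strand.vertex_rung] at this
  exact this.trans (by norm_cast; omega)

theorem exists_stem_to_pole (hk : 2 ≤ k) {p : Fin (k + 2)} (hp : p.val = 0 ∨ p.val = k + 1) :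
    ∃ t : Fin (k + 2), ((k + 1) / 2 ≤ t.val ∧ t.val ≤ (k + 2) / 2) ∧
      stemLen k + 1 + ((t - p : ℕ) + (p - t : ℕ)) = k := by
  rcases hp with hp | hp
  · exact ⟨⟨(k + 1) / 2, by omega⟩, by dsimp only; omega, by dsimp only [stemLen]; omega⟩
  · exact ⟨⟨(k + 2) / 2, by omega⟩, by dsimp only; omega, by dsimp only [stemLen]; omega⟩

theorem edist_site_pole_le (hk : 2 ≤ k) (s : Site G n k) {p : Fin (k + 2)}
    (hp : p.val = 0 ∨ p.val = k + 1) :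
    (graph G n k).edist (.site s) (.gadget s (.inr p)) ≤ k := by
  obtain ⟨t, ht, hkt⟩ := exists_stem_to_pole hk hp
  have hstem := (Strand.stem s t ht).edist_vertex_le (Nat.zero_le _) le_rfl
  simp only [Strand.vertex, Strand.length, pathSeq_zero, pathSeq_succ_length,
    Nat.sub_zero] at hstem
  calc _ ≤ (graph G n k).edist (.site s) (.gadget s (.inr t)) +
        (graph G n k).edist (.gadget s (.inr t)) (.gadget s (.inr p)) :=
        SimpleGraph.edist_triangle
    _ ≤ (stemLen k + 1 : ℕ) + ((t - p : ℕ) + (p - t : ℕ) : ℕ) :=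
        add_le_add hstem (edist_rung_le s t p)
    _ = k := by exact_mod_cast hkt

theorem edist_gadget_pole_le (hk : 2 ≤ k) {s : Site G n k} {g : Gadget k}
    (hg : ¬IsPole (.gadget s g)) {p : Fin (k + 2)} (hp : p.val = 0 ∨ p.val = k + 1) :
    (graph G n k).edist (.gadget s g) (.gadget s (.inr p)) ≤ k := by
  rcases g with st | z
  · obtain ⟨t, ht, hkt⟩ := exists_stem_to_pole hk hp
    have hstem := (Strand.stem s t ht).edist_vertex_le (i := st + 1) (j := stemLen k + 1)
      (by omega) le_rfl
    simp only [Strand.vertex, pathSeq_succ, pathSeq_succ_length] at hstem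
    calc _ ≤ (graph G n k).edist (.gadget s (.inl st)) (.gadget s (.inr t)) +
          (graph G n k).edist (.gadget s (.inr t)) (.gadget s (.inr p)) :=
          SimpleGraph.edist_triangle
      _ ≤ (stemLen k + 1 - (st + 1) : ℕ) + ((t - p : ℕ) + (p - t : ℕ) : ℕ) :=
          add_le_add hstem (edist_rung_le s t p)
      _ ≤ k := by norm_cast; omega
  · simp only [IsPole] at hg
    exact (edist_rung_le s z p).trans (by norm_cast; omega)

theorem exists_near_poles (hk : 2 ≤ k) {w : Vert G n k} (hbase : ∀ v, w ≠ .base v)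
    (hw : ¬IsPole w) : ∃ s : Site G n k,
      (graph G n k).edist w (.gadget s (.inr 0)) ≤ k ∧
      (graph G n k).edist w (.gadget s (.inr (Fin.last (k + 1)))) ≤ k := by
  rcases w with v | s | ⟨s, g⟩ | v
  · exact absurd rfl (hbase v)
  · exact ⟨s, edist_site_pole_le hk s (by simp), edist_site_pole_le hk s (by simp)⟩
  · exact ⟨s, edist_gadget_pole_le hk hw (by simp), edist_gadget_pole_le hk hw (by simp)⟩
  · exact absurd trivial hw

def IsBlue (VR : Finset V) : Vert G n k → Prop
  | .gadget _ (.inr z) => z.val = 0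
  | .tip v => v ∈ VR
  | _ => False

def IsRed (VR : Finset V) : Vert G n k → Prop
  | .gadget _ (.inr z) => z.val = k + 1
  | .tip v => v ∉ VR
  | _ => False

theorem isPole_iff (VR : Finset V) {w : Vert G n k} : IsPole w ↔ IsBlue VR w ∨ IsRed VR w := by
  rcases w with _ | _ | ⟨_, _ | _⟩ | v <;> simp [IsPole, IsBlue, IsRed, em]

theorem IsBlue.not_isRed {VR : Finset V} {w : Vert G n k} (hw : IsBlue VR w) : ¬IsRed VR w := by
  rcases w with _ | _ | ⟨_, _ | _⟩ | v <;> simp_all [IsBlue, IsRed]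

end

end GadgetGraph

open GadgetGraph Finset

theorem stmt16_general {V : Type u} [Fintype V] (G : SimpleGraph V) (VL VR : Finset V)
    (hparts : Disjoint VL VR)
    (n k : ℕ) (hn : 1 < n) (hnk : n < k) (hk2n : k < 2 * n) :
    ∃ (W : Type u) (_ : Fintype W) (G' : SimpleGraph W) (ι : V ↪ W)
      (Blue0 Red0 : Finset W),
      Disjoint Blue0 Red0 ∧ (∀ v : V, ι v ∉ Blue0 ∧ ι v ∉ Red0) ∧
      -- (a) every extra vertex is within distance `k` of `Blue0` and of `Red0`:
      (∀ w : W, (∀ v : V, ι v ≠ w) → w ∉ Blue0 → w ∉ Red0 →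
        (∃ b ∈ Blue0, G'.edist w b ≤ (k : ℕ∞)) ∧ (∃ r ∈ Red0, G'.edist w r ≤ (k : ℕ∞))) ∧
      -- (b) every `x ∈ VL` is within distance `k` of some vertex of `Red0`, at distance at
      -- least `k+1` from every vertex of `Blue0`, and at distance at least `n+1` from
      -- every vertex of `Red0`:
      (∀ x ∈ VL, (∃ r ∈ Red0, G'.edist (ι x) r ≤ (k : ℕ∞)) ∧
        (∀ b ∈ Blue0, (k : ℕ∞) + 1 ≤ G'.edist (ι x) b) ∧
        (∀ r ∈ Red0, (n : ℕ∞) + 1 ≤ G'.edist (ι x) r)) ∧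
      -- (b') every `y ∈ VR` is within distance `k` of some vertex of `Blue0`, at distance
      -- at least `k+1` from every vertex of `Red0`, and at distance at least `n+1` from
      -- every vertex of `Blue0`:
      (∀ y ∈ VR, (∃ b ∈ Blue0, G'.edist (ι y) b ≤ (k : ℕ∞)) ∧
        (∀ r ∈ Red0, (k : ℕ∞) + 1 ≤ G'.edist (ι y) r) ∧
        (∀ b ∈ Blue0, (n : ℕ∞) + 1 ≤ G'.edist (ι y) b)) ∧
      -- (c) distances between vertices of `V(G) = VL ∪ VR`:
      (∀ u v : V, u ≠ v →
        (G.Adj u v → G'.edist (ι u) (ι v) = (n : ℕ∞)) ∧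
        (¬G.Adj u v → (k : ℕ∞) + 1 ≤ G'.edist (ι u) (ι v))) ∧
      -- (d) distinct vertices of `Blue0 ∪ Red0` are at distance at least `k+1`:
      (∀ w₁ w₂ : W, w₁ ∈ Blue0 ∨ w₁ ∈ Red0 → w₂ ∈ Blue0 ∨ w₂ ∈ Red0 → w₁ ≠ w₂ →
        (k : ℕ∞) + 1 ≤ G'.edist w₁ w₂) := by
  classical
  have hk : 2 ≤ k := by omega
  have hnk' : (n : ℕ∞) + 1 ≤ k := by exact_mod_cast hnk
  have : Fintype (Vert G n k) := Fintype.ofFinite _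
  refine ⟨Vert G n k, inferInstance, graph G n k, Vert.baseEmbedding,
    univ.filter (IsBlue VR), univ.filter (IsRed VR), disjoint_filter.2 fun _ _ => IsBlue.not_isRed,
    ?_, ?_, ?_, ?_, ?_, ?_⟩ <;> try simp only [mem_filter_univ]
  · simp [IsBlue, IsRed]
  · intro w hbase hb hr
    obtain ⟨s, h₀, h₁⟩ :=
      exists_near_poles hk (fun v h => hbase v h.symm) fun hw => ((isPole_iff VR).1 hw).elim hb hr
    exact ⟨⟨_, by simp [IsBlue], h₀⟩, ⟨_, by simp [IsRed], h₁⟩⟩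
  · intro x hx
    have hxR : x ∉ VR := Finset.disjoint_left.1 hparts hx
    refine ⟨⟨.tip x, hxR, edist_base_tip_le (by omega) x⟩, fun b hb => ?_, fun r hr => ?_⟩
    · exact add_one_le_edist_base_of_isPole ((isPole_iff VR).2 (.inl hb))
        (by rintro rfl; exact hxR hb)
    · exact hnk'.trans (le_edist_base_of_isPole ((isPole_iff VR).2 (.inr hr)) x)
  · intro y hy
    refine ⟨⟨.tip y, hy, edist_base_tip_le (by omega) y⟩, fun r hr => ?_, fun b hb => ?_⟩
    · exact add_one_le_edist_base_of_isPole ((isPole_iff VR).2 (.inr hr))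
        (by rintro rfl; exact hr hy)
    · exact hnk'.trans (le_edist_base_of_isPole ((isPole_iff VR).2 (.inl hb)) y)
  · intro u v huv
    simp only [Vert.baseEmbedding_apply]
    have h := le_edist_base hnk.le hk2n (G := G) u v
    refine ⟨fun hadj => le_antisymm (edist_base_le_of_adj hn.le hadj) ?_, fun hadj => ?_⟩ <;>
      simpa [baseLevel, huv.symm, hadj] using h
  · intro w₁ w₂ h₁ h₂ hne
    exact add_one_le_edist_of_isPole ((isPole_iff VR).2 h₁) ((isPole_iff VR).2 h₂) hne.symm

/-- for every finite bipartite simple graph `G` with parts `VL`, `VR` and all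
integers `n`, `k` with `1 < n < k < 2n`, there is a finite simple graph `G'` containing the
vertices of `G` (via an embedding `ι`), together with disjoint sets `Blue0`, `Red0` of new
vertices, satisfying conditions (a), (b), (b'), (c), (d). -/
theorem stmt16 {V : Type u} [Fintype V] (G : SimpleGraph V) (VL VR : Finset V)
    (hcover : ∀ v : V, v ∈ VL ∨ v ∈ VR) (hparts : Disjoint VL VR)
    (hbip : ∀ ⦃x y : V⦄, G.Adj x y → (x ∈ VL ∧ y ∈ VR) ∨ (x ∈ VR ∧ y ∈ VL))
    (n k : ℕ) (hn : 1 < n) (hnk : n < k) (hk2n : k < 2 * n) :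
    ∃ (W : Type u) (_ : Fintype W) (G' : SimpleGraph W) (ι : V ↪ W)
      (Blue0 Red0 : Finset W),
      Disjoint Blue0 Red0 ∧ (∀ v : V, ι v ∉ Blue0 ∧ ι v ∉ Red0) ∧
      -- (a) every extra vertex is within distance `k` of `Blue0` and of `Red0`:
      (∀ w : W, (∀ v : V, ι v ≠ w) → w ∉ Blue0 → w ∉ Red0 →
        (∃ b ∈ Blue0, G'.edist w b ≤ (k : ℕ∞)) ∧ (∃ r ∈ Red0, G'.edist w r ≤ (k : ℕ∞))) ∧
      -- (b) every `x ∈ VL` is within distance `k` of some vertex of `Red0`, at distance at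
      -- least `k+1` from every vertex of `Blue0`, and at distance at least `n+1` from
      -- every vertex of `Red0`:
      (∀ x ∈ VL, (∃ r ∈ Red0, G'.edist (ι x) r ≤ (k : ℕ∞)) ∧
        (∀ b ∈ Blue0, (k : ℕ∞) + 1 ≤ G'.edist (ι x) b) ∧
        (∀ r ∈ Red0, (n : ℕ∞) + 1 ≤ G'.edist (ι x) r)) ∧
      -- (b') every `y ∈ VR` is within distance `k` of some vertex of `Blue0`, at distance
      -- at least `k+1` from every vertex of `Red0`, and at distance at least `n+1` from
      -- every vertex of `Blue0`:
      (∀ y ∈ VR, (∃ b ∈ Blue0, G'.edist (ι y) b ≤ (k : ℕ∞)) ∧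
        (∀ r ∈ Red0, (k : ℕ∞) + 1 ≤ G'.edist (ι y) r) ∧
        (∀ b ∈ Blue0, (n : ℕ∞) + 1 ≤ G'.edist (ι y) b)) ∧
      -- (c) distances between vertices of `V(G) = VL ∪ VR`:
      (∀ u v : V, u ≠ v →
        (G.Adj u v → G'.edist (ι u) (ι v) = (n : ℕ∞)) ∧
        (¬G.Adj u v → (k : ℕ∞) + 1 ≤ G'.edist (ι u) (ι v))) ∧
      -- (d) distinct vertices of `Blue0 ∪ Red0` are at distance at least `k+1`:
      (∀ w₁ w₂ : W, w₁ ∈ Blue0 ∨ w₁ ∈ Red0 → w₂ ∈ Blue0 ∨ w₂ ∈ Red0 → w₁ ≠ w₂ →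
        (k : ℕ∞) + 1 ≤ G'.edist w₁ w₂) :=
  stmt16_general G VL VR hparts n k hn hnk hk2n
end
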